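/- Let P ∈ MRPD(w) and let pipes j and j' (j ≠ j') both be removable pipes of P. Then pipe j' is also a removable pipe of Φ_j(P). -/

import Mathlib

open Polynomial

namespace GrothPS

/-- Filter a finset by an arbitrary (possibly non-decidable) predicate. -/
noncomputable def fselect {α : Type*} (p : α → Prop) (s : Finset α) : Finset α :=
  @Finset.filter α p (fun _ => Classical.propDecidable _) s

/-- Filter a list by an arbitrary (possibly non-decidable) predicate. -/
noncomputable def lselect {α : Type*} (p : α → Prop) (l : List α) : List α :=
  l.filter (fun a => @decide (p a) (Classical.propDecidable _))

/-- `if`-term for an arbitrary proposition. -/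
noncomputable def cIte {α : Sort*} (p : Prop) (a b : α) : α :=
  @ite α p (Classical.propDecidable p) a b

/-- The staircase shape of rank `n`: the set of (matrix-indexed) positions `(i,j)` with
`1 ≤ i`, `1 ≤ j` and `i + j ≤ n + 1`; row `i` consists of the `n + 1 - i` left-justified
tiles `(i,1),…,(i,n+1-i)`. -/
def staircase (n : ℕ) : Finset (ℕ × ℕ) :=
  (Finset.range (n + 2) ×ˢ Finset.range (n + 2)).filter
    (fun t => 1 ≤ t.1 ∧ 1 ≤ t.2 ∧ t.1 + t.2 ≤ n + 1)

/-- One step in tracing a pipe through a pipe dream whose set of crossing tiles is `C`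
(every other tile of the staircase being a bumping tile).  A state `((i,j),d)` means the
pipe is entering the tile in row `i` and column `j` from the top (`d = true`) or from the
right (`d = false`).  At a crossing tile the pipe goes straight (top→bottom, right→left);
at a bumping tile it turns (top→left, right→bottom).  States with `j = 0` mean the pipe has
already exited from the left boundary at row `i`; they are absorbing. -/
def step (C : Finset (ℕ × ℕ)) (s : (ℕ × ℕ) × Bool) : (ℕ × ℕ) × Bool :=
  if s.1.2 = 0 then s
  else if s.1 ∈ C then
    (if s.2 then ((s.1.1 + 1, s.1.2), true) else ((s.1.1, s.1.2 - 1), false))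
  else
    (if s.2 then ((s.1.1, s.1.2 - 1), false) else ((s.1.1 + 1, s.1.2), true))

/-- The state of the pipe entering at the top of column `c` after `k` tracing steps. -/
def pipeState (C : Finset (ℕ × ℕ)) (c k : ℕ) : (ℕ × ℕ) × Bool :=
  (step C)^[k] ((1, c), true)

/-- The pipe entering at the top of column `c` passes through the state `s`. -/
def pipePasses (C : Finset (ℕ × ℕ)) (c : ℕ) (s : (ℕ × ℕ) × Bool) : Prop :=
  ∃ k, pipeState C c k = s

/-- The pipe entering at the top of column `c` traverses the tile `t`, entering it from the
top (`d = true`) or from the right (`d = false`). -/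
def travTile (C : Finset (ℕ × ℕ)) (c : ℕ) (t : ℕ × ℕ) (d : Bool) : Prop :=
  pipePasses C c (t, d)

/-- The row of the left boundary at which the pipe entering at the top of column `c` exits
(for a rank-`n` diagram; `2 * n + 4` tracing steps always suffice). -/
def exitRow (n : ℕ) (C : Finset (ℕ × ℕ)) (c : ℕ) : ℕ :=
  (pipeState C c (2 * n + 4)).1.1

/-- The pipes entering at the top of columns `a` and `b` cross at the tile `t`. -/
def crossAt (C : Finset (ℕ × ℕ)) (a b : ℕ) (t : ℕ × ℕ) : Prop :=
  t ∈ C ∧ ((travTile C a t true ∧ travTile C b t false) ∨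
           (travTile C b t true ∧ travTile C a t false))

/-- A (marked) pipe diagram for a word: `word` is the word (with distinct positive entries)
labelling the pipes, `C` is the set of crossing tiles and `M` the set of marked bumping
tiles.  Its rank is `word.length`. -/
structure PD where
  word : List ℕ
  C : Finset (ℕ × ℕ)
  M : Finset (ℕ × ℕ)
deriving DecidableEq

/-- The entry column of the pipe labelled `x` in a diagram for the word `v`: pipes are
labelled by the entries of `v` in increasing order from left to right along the top
boundary, so the pipe labelled `x` enters at the top of column `rank of x in v` (+1, as
columns are 1-indexed). -/
def wordCol (v : List ℕ) (x : ℕ) : ℕ := (v.filter (fun y => decide (y < x))).length + 1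

/-- `P` is a marked reduced pipe dream of the word `P.word` (for a permutation
`w = w(1)⋯w(n)` take `P.word = [w(1),…,w(n)]`): the tiles fill the rank-`n` staircase with
no crossing tile on the southeast diagonal; reading the pipe labels along the left boundary
from top to bottom gives the word (pipe labelled `word.get r` exits at row `r+1`); any two
pipes cross at most once; and a bumping tile may be marked only if the two pipes traversing
it cross at some position strictly above its row. -/
def isMRPD (P : PD) : Prop :=
  P.word.Nodup ∧ (∀ x ∈ P.word, 1 ≤ x) ∧
  P.C ⊆ staircase P.word.length ∧ (∀ t ∈ P.C, t.1 + t.2 ≤ P.word.length) ∧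
  P.M ⊆ staircase P.word.length ∧ (∀ t ∈ P.M, t ∉ P.C) ∧
  (∀ r : Fin P.word.length,
    exitRow P.word.length P.C (wordCol P.word (P.word.get r)) = (r : ℕ) + 1) ∧
  (∀ a b, 1 ≤ a → a ≤ P.word.length → 1 ≤ b → b ≤ P.word.length →
    ∀ t t', crossAt P.C a b t → crossAt P.C a b t' → t = t') ∧
  (∀ t ∈ P.M, ∃ a b, 1 ≤ a ∧ a ≤ P.word.length ∧ 1 ≤ b ∧ b ≤ P.word.length ∧
    travTile P.C a t true ∧ travTile P.C b t false ∧
    ∃ t', crossAt P.C a b t' ∧ t'.1 < t.1)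

/-- The pipe labelled `j` is removable in `P`: (i) in the column where pipe `j` enters,
every crossing tile is traversed by pipe `j` and there is no marked bumping tile; (ii) for
every crossing tile traversed by pipe `j`, the tile directly above it (if any) is not an
unmarked bumping tile; (iii) pipe `j` traverses no marked bumping tile. -/
def Removable (P : PD) (j : ℕ) : Prop :=
  j ∈ P.word ∧
  (∀ i, (i, wordCol P.word j) ∈ P.C →
    (travTile P.C (wordCol P.word j) (i, wordCol P.word j) true ∨
     travTile P.C (wordCol P.word j) (i, wordCol P.word j) false)) ∧
  (∀ i, (i, wordCol P.word j) ∉ P.M) ∧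
  (∀ t ∈ P.C,
    (travTile P.C (wordCol P.word j) t true ∨ travTile P.C (wordCol P.word j) t false) →
    2 ≤ t.1 → ((t.1 - 1, t.2) ∈ P.C ∨ (t.1 - 1, t.2) ∈ P.M)) ∧
  (∀ t ∈ P.M, ¬ travTile P.C (wordCol P.word j) t true ∧
    ¬ travTile P.C (wordCol P.word j) t false)

/-- A core marked reduced pipe dream: none of its pipes is removable. -/
def isCore (P : PD) : Prop := ∀ j, ¬ Removable P j

/-- The pipe entering at the top of column `c` crosses from column `y + 1` into column `y`
(i.e. enters some tile of column `y` from the right) at some row `≤ i`. -/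
def crossedIntoLe (C : Finset (ℕ × ℕ)) (c y i : ℕ) : Prop :=
  ∃ i' ≤ i, pipePasses C c ((i', y), false)

/-- The position (together with the entering direction `d`) of the rank-`n` diagram `(C,·)`
with removable pipe entering at column `c` corresponding to the position `t` of the
rank-`(n-1)` diagram obtained by the deletion/merging operation: tiles strictly to the right
of column `c` are shifted one unit leftward, and in each column strictly to the left of `c`
the tile pieces lying below the removed pipe are shifted one unit upward. -/
noncomputable def oldPos (C : Finset (ℕ × ℕ)) (c : ℕ) (t : ℕ × ℕ) (d : Bool) : ℕ × ℕ :=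
  if c ≤ t.2 then (t.1, t.2 + 1)
  else (t.1 + cIte (crossedIntoLe C c (if d then t.2 - 1 else t.2) t.1) 1 0, t.2)

/-- The deletion/merging operation `Φ_j`, erasing the (removable) pipe labelled `j`. -/
noncomputable def PhiOp (P : PD) (j : ℕ) : PD :=
  ⟨P.word.erase j,
   fselect (fun t => oldPos P.C (wordCol P.word j) t true ∈ P.C)
     (staircase (P.word.length - 1)),
   fselect (fun t => oldPos P.C (wordCol P.word j) t true ∈ P.M)
     (staircase (P.word.length - 1))⟩

/-- The reduction map `Φ`: successively erase removable pipes while some pipe is removable. -/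
noncomputable def Phi (P : PD) : PD :=
  letI : Decidable (∃ j, Removable P j) := Classical.propDecidable _
  if h : ∃ j, Removable P j then Phi (PhiOp P (Classical.choose h)) else P
termination_by P.word.length
decreasing_by
  have hj : Classical.choose h ∈ P.word := (Classical.choose_spec h).1
  show (P.word.erase (Classical.choose h)).length < P.word.length
  rw [List.length_erase_of_mem hj]
  have h0 : 0 < P.word.length := List.length_pos_of_mem hj
  omega

/-- The finset of all marked reduced pipe dreams of the word `v`. -/
noncomputable def MRPDF (v : List ℕ) : Finset PD :=
  fselect isMRPD
    (((staircase v.length).powerset ×ˢ (staircase v.length).powerset).image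
      (fun p => ⟨v, p.1, p.2⟩))

/-- `Υ_v(β)`: the principal specialization of the β-Grothendieck polynomial,
`Σ_{P ∈ MRPD(v)} β^{mbt(P)}` (a polynomial in `β = X`). -/
noncomputable def UpsilonW (v : List ℕ) : Polynomial ℤ :=
  ∑ P ∈ MRPDF v, (X : Polynomial ℤ) ^ P.M.card

/-- The finset of all core marked reduced pipe dreams of the word `v`. -/
noncomputable def CMRPDF (v : List ℕ) : Finset PD := fselect isCore (MRPDF v)

/-- `d_v(β) = Σ_{P ∈ CMRPD(v)} β^{mbt(P)}`. -/
noncomputable def dPoly (v : List ℕ) : Polynomial ℤ :=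
  ∑ P ∈ CMRPDF v, (X : Polynomial ℤ) ^ P.M.card

/-- Marked reduced pipe dreams of `v` in which every pipe whose label is an entry of `v`
not appearing in `u` is non-removable. -/
noncomputable def CMRPDrelF (u v : List ℕ) : Finset PD :=
  fselect (fun P => ∀ j ∈ v, j ∉ u → ¬ Removable P j) (MRPDF v)

/-- `d_{u,v}(β) = Σ_{P ∈ CMRPD(u,v)} β^{mbt(P)}`. -/
noncomputable def dRel (u v : List ℕ) : Polynomial ℤ :=
  ∑ P ∈ CMRPDrelF u v, (X : Polynomial ℤ) ^ P.M.card

/-- The number of (ordinary) reduced pipe dreams of the word `v` (marked reduced pipe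
dreams with no marked bumping tile), i.e. `Υ_v = Υ_v(0)`. -/
noncomputable def NRPD (v : List ℕ) : ℕ :=
  (fselect (fun P => P.M = (∅ : Finset (ℕ × ℕ))) (MRPDF v)).card

/-- The one-line word `[w(1),…,w(n)]` of a permutation `w ∈ S_n`. -/
def permWord {n : ℕ} (w : Equiv.Perm (Fin n)) : List ℕ :=
  List.ofFn (fun r => (w r : ℕ) + 1)

/-- `p_v(w)`: the number of occurrences of the pattern `v ∈ S_m` in `w ∈ S_n`, i.e. the
number of strictly increasing index sequences along which the entries of `w` are in the
same relative order as `v`. -/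
noncomputable def pCount {m n : ℕ} (v : Equiv.Perm (Fin m)) (w : Equiv.Perm (Fin n)) : ℕ :=
  (fselect (fun f : Fin m → Fin n =>
      StrictMono f ∧ ∀ k l, v k < v l ↔ w (f k) < w (f l))
    Finset.univ).card

/-- The polynomials `c_w(β)`, defined recursively by `c_∅(β) = 1` and
`c_w(β) = Υ_w(β) − Σ_{0 ≤ m < n} Σ_{v ∈ S_m} c_v(β)·p_v(w)`. -/
noncomputable def cPoly (n : ℕ) (w : Equiv.Perm (Fin n)) : Polynomial ℤ :=
  UpsilonW (permWord w) -
    ∑ m ∈ (Finset.range n).attach,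
      ∑ v : Equiv.Perm (Fin (m : ℕ)), (pCount v w : Polynomial ℤ) * cPoly (m : ℕ) v
termination_by n
decreasing_by exact Finset.mem_range.mp m.2

/-- The pattern `1423` as a permutation in `S_4` (0-indexed values). -/
def pat1423 : Equiv.Perm (Fin 4) :=
  ⟨![0, 3, 1, 2], ![0, 2, 3, 1], by intro x; fin_cases x <;> rfl,
    by intro x; fin_cases x <;> rfl⟩

/-- The pattern `1342` as a permutation in `S_4` (0-indexed values). -/
def pat1342 : Equiv.Perm (Fin 4) :=
  ⟨![0, 2, 3, 1], ![0, 3, 1, 2], by intro x; fin_cases x <;> rfl,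
    by intro x; fin_cases x <;> rfl⟩

/-- `perm(v)`: the standardization of a word `v` with distinct entries, the permutation
whose entries have the same relative order as `v` (junk value `1` if `v` has a repeat). -/
noncomputable def permOf (v : List ℕ) : Equiv.Perm (Fin v.length) :=
  if h : v.Nodup then
    (Equiv.ofBijective
      (fun k => (⟨v.get k, List.mem_toFinset.mpr (v.get_mem ..)⟩ : {x // x ∈ v.toFinset}))
      (by
        rw [Fintype.bijective_iff_injective_and_card]
        constructor
        · intro a b hab
          exact List.nodup_iff_injective_get.mp h (by simpa using congrArg Subtype.val hab)
        · rw [Fintype.card_fin, Fintype.card_coe, List.toFinset_card_of_nodup h])).trans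
      ((v.toFinset.orderIsoOfFin (List.toFinset_card_of_nodup h)).symm.toEquiv)
  else 1

/-- The pointer sequence of the augmenting algorithm `Ψ_j`: `psiPtr P i k` is the value of
the pointer after the first `k` columns of `P` have been processed, starting from `i`. -/
def psiPtr (P : PD) (i : ℕ) : ℕ → ℕ
  | 0 => i
  | k + 1 =>
    if (psiPtr P i k - 1, k + 1) ∈ staircase P.word.length ∧
        (psiPtr P i k - 1, k + 1) ∉ P.C ∧ (psiPtr P i k - 1, k + 1) ∉ P.M then
      psiPtr P i k - 1
    else psiPtr P i k

/-- The augmenting operation `Ψ_j`, reinserting a pipe labelled `j` into a marked reduced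
pipe dream `P` of the word `v.erase j`, producing a diagram for the word `v`. -/
noncomputable def PsiOp (P : PD) (v : List ℕ) (j : ℕ) : PD :=
  ⟨v,
   fselect (fun t =>
     if t.2 ≤ (v.filter (fun y => decide (y < j))).length then
       (if t.1 < psiPtr P (v.idxOf j + 1) (t.2 - 1) then (t.1, t.2) ∈ P.C
        else if t.1 = psiPtr P (v.idxOf j + 1) (t.2 - 1) ∧
            psiPtr P (v.idxOf j + 1) t.2 = psiPtr P (v.idxOf j + 1) (t.2 - 1) then True
        else (t.1 - 1, t.2) ∈ P.C)
     else if t.2 = (v.filter (fun y => decide (y < j))).length + 1 then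
       t.1 < psiPtr P (v.idxOf j + 1) (v.filter (fun y => decide (y < j))).length
     else (t.1, t.2 - 1) ∈ P.C) (staircase v.length),
   fselect (fun t =>
     if t.2 ≤ (v.filter (fun y => decide (y < j))).length then
       (if t.1 < psiPtr P (v.idxOf j + 1) (t.2 - 1) then (t.1, t.2) ∈ P.M
        else if t.1 = psiPtr P (v.idxOf j + 1) (t.2 - 1) then False
        else (t.1 - 1, t.2) ∈ P.M)
     else if t.2 = (v.filter (fun y => decide (y < j))).length + 1 then False
     else (t.1, t.2 - 1) ∈ P.M) (staircase v.length)⟩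


/- ===================== Auxiliary development for Statement 7 ===================== -/

lemma mem_staircase {m : ℕ} {t : ℕ × ℕ} :
    t ∈ staircase m ↔ 1 ≤ t.1 ∧ 1 ≤ t.2 ∧ t.1 + t.2 ≤ m + 1 := by
  simp only [staircase, Finset.mem_filter, Finset.mem_product, Finset.mem_range]
  omega

lemma cIte_pos {α : Sort*} {p : Prop} (hp : p) (a b : α) : cIte p a b = a := by
  simp [cIte, hp]

lemma cIte_neg {α : Sort*} {p : Prop} (hp : ¬ p) (a b : α) : cIte p a b = b := by
  simp [cIte, hp]

lemma pipeState_zero (C : Finset (ℕ × ℕ)) (b : ℕ) : pipeState C b 0 = ((1, b), true) := rfl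

lemma pipeState_succ (C : Finset (ℕ × ℕ)) (b k : ℕ) :
    pipeState C b (k + 1) = step C (pipeState C b k) := by
  unfold pipeState
  rw [Function.iterate_succ_apply']

lemma step_row_ge (C : Finset (ℕ × ℕ)) (s : (ℕ × ℕ) × Bool) :
    s.1.1 ≤ (step C s).1.1 := by
  unfold step
  split_ifs <;> simp

lemma step_col_le (C : Finset (ℕ × ℕ)) (s : (ℕ × ℕ) × Bool) :
    (step C s).1.2 ≤ s.1.2 := by
  unfold step
  split_ifs <;> simp <;> omega

lemma ps_row (C : Finset (ℕ × ℕ)) (b k : ℕ) : 1 ≤ (pipeState C b k).1.1 := by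
  induction k with
  | zero => simp [pipeState_zero]
  | succ k ih =>
      rw [pipeState_succ]
      exact le_trans ih (step_row_ge C _)

lemma ps_col_mono (C : Finset (ℕ × ℕ)) (b : ℕ) {k k' : ℕ} (h : k ≤ k') :
    (pipeState C b k').1.2 ≤ (pipeState C b k).1.2 := by
  induction k' with
  | zero => simp_all
  | succ k' ih =>
      rcases Nat.lt_or_ge k (k' + 1) with h' | h'
      · rw [pipeState_succ]
        exact le_trans (step_col_le C _) (ih (by omega))
      · have : k = k' + 1 := by omega
        subst this; rfl

lemma ps_col_le (C : Finset (ℕ × ℕ)) (b k : ℕ) : (pipeState C b k).1.2 ≤ b := by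
  have := ps_col_mono C b (Nat.zero_le k)
  simpa [pipeState_zero] using this

/-- A state at column 0 is absorbing. -/
lemma step_absorb (C : Finset (ℕ × ℕ)) (s : (ℕ × ℕ) × Bool) (h : s.1.2 = 0) :
    step C s = s := by
  unfold step; simp [h]

lemma ps_absorb (C : Finset (ℕ × ℕ)) (b : ℕ) {k k' : ℕ} (h : k ≤ k')
    (h0 : (pipeState C b k).1.2 = 0) : pipeState C b k' = pipeState C b k := by
  induction k' with
  | zero => have : k = 0 := by omega
            subst this; rfl
  | succ k' ih =>
      rcases Nat.lt_or_ge k (k' + 1) with h' | h'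
      · rw [pipeState_succ, ih (by omega), step_absorb C _ h0]
      · have : k = k' + 1 := by omega
        subst this; rfl

/-- The predecessor of a state entering a tile of column `y ≥ 1` from the right lies
in column `y + 1`. -/
lemma pred_false (C : Finset (ℕ × ℕ)) (b k : ℕ) {i y : ℕ}
    (h : pipeState C b (k + 1) = ((i, y), false)) (hy : 1 ≤ y) :
    (pipeState C b k).1.2 = y + 1 := by
  rw [pipeState_succ] at h
  obtain ⟨⟨⟨a, z⟩, d⟩, heq⟩ : ∃ s, pipeState C b k = s := ⟨_, rfl⟩
  rw [heq] at h ⊢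
  unfold step at h
  split_ifs at h with h1 h2 h3 h4 <;> simp_all <;> omega

/-- At most one entering-from-the-right state per column. -/
lemma false_pass_unique (C : Finset (ℕ × ℕ)) (b : ℕ) {i i' y : ℕ}
    (h : pipePasses C b ((i, y), false)) (h' : pipePasses C b ((i', y), false)) :
    i = i' := by
  obtain ⟨k, hk⟩ := h
  obtain ⟨k', hk'⟩ := h'
  rcases Nat.eq_zero_or_pos y with hy | hy
  · -- column 0 : absorbing
    subst hy
    rcases le_total k k' with h | h
    · have := ps_absorb C b h (by rw [hk]) ; rw [hk, hk'] at this; simpa using this.symm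
    · have := ps_absorb C b h (by rw [hk']) ; rw [hk, hk'] at this; simpa using this
  · -- positive column : use column monotonicity
    rcases Nat.lt_trichotomy k k' with h | h | h
    · obtain ⟨k'', rfl⟩ : ∃ k'', k' = k'' + 1 := ⟨k' - 1, by omega⟩
      have hp := pred_false C b k'' hk' hy
      have hm := ps_col_mono C b (show k ≤ k'' by omega)
      rw [hk] at hm; simp at hm; omega
    · subst h; rw [hk] at hk'
      simpa using hk' 
    · obtain ⟨k'', rfl⟩ : ∃ k'', k = k'' + 1 := ⟨k - 1, by omega⟩
      have hp := pred_false C b k'' hk hy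
      have hm := ps_col_mono C b (show k' ≤ k'' by omega)
      rw [hk'] at hm; simp at hm; omega

/-- A from-the-right state at column `y ≥ 1` implies `y < b`. -/
lemma false_pass_col_lt (C : Finset (ℕ × ℕ)) (b : ℕ) {i y : ℕ}
    (h : pipePasses C b ((i, y), false)) (hy : 1 ≤ y) : y < b := by
  obtain ⟨k, hk⟩ := h
  match k with
  | 0 => simp [pipeState_zero] at hk
  | k + 1 =>
      have hp := pred_false C b k hk hy
      have := ps_col_le C b k
      omega

/- ---------- explicit step computations ---------- -/

lemma step_cross_true (C : Finset (ℕ × ℕ)) {i y : ℕ} (hy : y ≠ 0) (h : (i, y) ∈ C) :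
    step C ((i, y), true) = ((i + 1, y), true) := by
  unfold step; simp [hy, h]

lemma step_cross_false (C : Finset (ℕ × ℕ)) {i y : ℕ} (hy : y ≠ 0) (h : (i, y) ∈ C) :
    step C ((i, y), false) = ((i, y - 1), false) := by
  unfold step; simp [hy, h]

lemma step_bump_true (C : Finset (ℕ × ℕ)) {i y : ℕ} (hy : y ≠ 0) (h : (i, y) ∉ C) :
    step C ((i, y), true) = ((i, y - 1), false) := by
  unfold step; simp [hy, h]

lemma step_bump_false (C : Finset (ℕ × ℕ)) {i y : ℕ} (hy : y ≠ 0) (h : (i, y) ∉ C) :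
    step C ((i, y), false) = ((i + 1, y), true) := by
  unfold step; simp [hy, h]

lemma pass_step (C : Finset (ℕ × ℕ)) (b : ℕ) {s : (ℕ × ℕ) × Bool}
    (h : pipePasses C b s) : pipePasses C b (step C s) := by
  obtain ⟨k, hk⟩ := h
  exact ⟨k + 1, by rw [pipeState_succ, hk]⟩

/- ---------- the structure of a removable pipe ---------- -/

/-- Row at which the removable pipe leaves its entry column. -/
noncomputable def rrRow (C : Finset (ℕ × ℕ)) (c : ℕ) : ℕ :=
  sInf {i : ℕ | (i + 1, c) ∉ C} + 1

/-- Row at which the removable pipe enters column `y` from the right. -/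
noncomputable def eRow (C : Finset (ℕ × ℕ)) (c y : ℕ) : ℕ :=
  Classical.epsilon (fun i => pipePasses C c ((i, y), false))

section PipeJ

variable {C M : Finset (ℕ × ℕ)} {n c : ℕ}

lemma rr_nonempty (hC4 : ∀ t ∈ C, t.1 + t.2 ≤ n) : {i : ℕ | (i + 1, c) ∉ C}.Nonempty := by
  refine ⟨n, fun h => ?_⟩
  have := hC4 _ h; simp at this; omega

lemma rr_pos : 1 ≤ rrRow C c := Nat.le_add_left 1 _

lemma rr_spec (hC4 : ∀ t ∈ C, t.1 + t.2 ≤ n) : (rrRow C c, c) ∉ C := by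
  have := Nat.sInf_mem (rr_nonempty (c := c) hC4)
  simpa [rrRow] using this

lemma rr_min {i : ℕ} (h1 : 1 ≤ i) (h2 : i < rrRow C c) : (i, c) ∈ C := by
  have := Nat.notMem_of_lt_sInf (show i - 1 < sInf {i : ℕ | (i + 1, c) ∉ C} by
    unfold rrRow at h2; omega)
  simp only [Set.mem_setOf_eq, not_not] at this
  have hi : i - 1 + 1 = i := by omega
  rwa [hi] at this

lemma colc_pass (k : ℕ) (hk : k + 1 ≤ rrRow C c) (hc1 : 1 ≤ c) :
    pipeState C c k = ((k + 1, c), true) := by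
  induction k with
  | zero => rfl
  | succ k ih =>
      rw [pipeState_succ, ih (by omega),
        step_cross_true C (by omega) (rr_min (by omega) (by omega))]

lemma pass_rr (hC4 : ∀ t ∈ C, t.1 + t.2 ≤ n) (hc1 : 1 ≤ c) :
    pipeState C c (rrRow C c) = ((rrRow C c, c - 1), false) := by
  obtain ⟨k, hk⟩ : ∃ k, rrRow C c = k + 1 := ⟨rrRow C c - 1, by have := rr_pos (C := C) (c := c); omega⟩
  rw [hk, pipeState_succ, colc_pass k (by omega) hc1, ← hk,
    step_bump_true C (by omega) (rr_spec hC4)]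

lemma colc_after (hC4 : ∀ t ∈ C, t.1 + t.2 ≤ n) (hc1 : 1 ≤ c) {k : ℕ}
    (hk : rrRow C c ≤ k) : (pipeState C c k).1.2 < c := by
  have := ps_col_mono C c hk
  rw [pass_rr hC4 hc1] at this
  simp at this; omega

lemma pass_colc (hC4 : ∀ t ∈ C, t.1 + t.2 ≤ n) (hc1 : 1 ≤ c) {i : ℕ} {d : Bool}
    (h : pipePasses C c ((i, c), d)) : d = true ∧ 1 ≤ i ∧ i ≤ rrRow C c := by
  obtain ⟨k, hk⟩ := h
  rcases Nat.lt_or_ge k (rrRow C c) with h' | h'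
  · rw [colc_pass k (by omega) hc1] at hk
    have h1 : k + 1 = i ∧ true = d := by simpa using hk
    exact ⟨h1.2.symm, by omega, by omega⟩
  · have := colc_after hC4 hc1 h'
    rw [hk] at this; simp at this

lemma colc_iff (hC4 : ∀ t ∈ C, t.1 + t.2 ≤ n) (hc1 : 1 ≤ c)
    (hcol : ∀ i, (i, c) ∈ C →
      travTile C c (i, c) true ∨ travTile C c (i, c) false) {i : ℕ} (h1 : 1 ≤ i) :
    (i, c) ∈ C ↔ i < rrRow C c := by
  constructor
  · intro h
    rcases hcol i h with ht | ht <;>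
    · obtain ⟨-, -, hle⟩ := pass_colc hC4 hc1 ht
      rcases Nat.lt_or_ge i (rrRow C c) with h' | h'
      · exact h'
      · have hieq : i = rrRow C c := by omega
        rw [hieq] at h
        exact absurd h (rr_spec hC4)
  · exact rr_min h1

end PipeJ

section PipeJ2

variable {C M : Finset (ℕ × ℕ)} {n c : ℕ}

lemma pass_row_ge {b i y : ℕ} {d : Bool} (h : pipePasses C b ((i, y), d)) : 1 ≤ i := by
  obtain ⟨k, hk⟩ := h
  have := ps_row C b k
  rw [hk] at this; exact this

lemma bump_pair
    (habove : ∀ t ∈ C, (travTile C c t true ∨ travTile C c t false) → 2 ≤ t.1 →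
      ((t.1 - 1, t.2) ∈ C ∨ (t.1 - 1, t.2) ∈ M))
    (hnomark : ∀ t ∈ M, ¬ travTile C c t true ∧ ¬ travTile C c t false)
    {i y : ℕ} (hy : 1 ≤ y) (hp : pipePasses C c ((i, y), false)) (hnc : (i, y) ∉ C) :
    (i + 1, y) ∉ C := by
  intro hmem
  have hi : 1 ≤ i := pass_row_ge hp
  have hp2 : pipePasses C c ((i + 1, y), true) := by
    have := pass_step C c hp
    rwa [step_bump_false C (by omega) hnc] at this
  rcases habove _ hmem (Or.inl hp2) (by omega) with h | h
  · simp only [show i + 1 - 1 = i from rfl] at h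
    exact hnc h
  · simp only [show i + 1 - 1 = i from rfl] at h
    exact (hnomark _ h).2 hp

lemma e_exists (hC4 : ∀ t ∈ C, t.1 + t.2 ≤ n) (hc1 : 1 ≤ c)
    (habove : ∀ t ∈ C, (travTile C c t true ∨ travTile C c t false) → 2 ≤ t.1 →
      ((t.1 - 1, t.2) ∈ C ∨ (t.1 - 1, t.2) ∈ M))
    (hnomark : ∀ t ∈ M, ¬ travTile C c t true ∧ ¬ travTile C c t false) :
    ∀ y, y < c → ∃ i, pipePasses C c ((i, y), false) := by
  have key : ∀ m y, y < c → c - y ≤ m + 1 → ∃ i, pipePasses C c ((i, y), false) := by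
    intro m
    induction m with
    | zero =>
        intro y hy hm
        have : y = c - 1 := by omega
        subst this
        exact ⟨rrRow C c, ⟨rrRow C c, pass_rr hC4 hc1⟩⟩
    | succ m ih =>
        intro y hy hm
        rcases Nat.lt_or_ge (c - y) (m + 2) with h | h
        · exact ih y hy (by omega)
        · obtain ⟨i, hi⟩ := ih (y + 1) (by omega) (by omega)
          by_cases hmem : (i, y + 1) ∈ C
          · refine ⟨i, ?_⟩
            have := pass_step C c hi
            rwa [step_cross_false C (by omega) hmem] at this
          · refine ⟨i + 1, ?_⟩
            have h1 := pass_step C c hi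
            rw [step_bump_false C (by omega) hmem] at h1
            have h2 := pass_step C c h1
            rwa [step_bump_true C (by omega) (bump_pair habove hnomark (by omega) hi hmem)] at h2
  intro y hy
  exact key (c - y) y hy (by omega)

lemma e_eq {y i : ℕ} (h : pipePasses C c ((i, y), false)) : eRow C c y = i := by
  have hex : ∃ i, pipePasses C c ((i, y), false) := ⟨i, h⟩
  have := Classical.epsilon_spec hex
  exact false_pass_unique C c this h

lemma e_spec (hC4 : ∀ t ∈ C, t.1 + t.2 ≤ n) (hc1 : 1 ≤ c)
    (habove : ∀ t ∈ C, (travTile C c t true ∨ travTile C c t false) → 2 ≤ t.1 →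
      ((t.1 - 1, t.2) ∈ C ∨ (t.1 - 1, t.2) ∈ M))
    (hnomark : ∀ t ∈ M, ¬ travTile C c t true ∧ ¬ travTile C c t false)
    {y : ℕ} (hy : y < c) : pipePasses C c ((eRow C c y, y), false) :=
  Classical.epsilon_spec (e_exists hC4 hc1 habove hnomark y hy)

end PipeJ2

/-- Bundle of the facts about `P` and the removable pipe `j` (entry column `c`)
that drive the deletion analysis. -/
structure JCtx (C M : Finset (ℕ × ℕ)) (n c : ℕ) : Prop where
  hC4 : ∀ t ∈ C, t.1 + t.2 ≤ n
  hc1 : 1 ≤ c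
  hcol : ∀ i, (i, c) ∈ C → travTile C c (i, c) true ∨ travTile C c (i, c) false
  habove : ∀ t ∈ C, (travTile C c t true ∨ travTile C c t false) → 2 ≤ t.1 →
      ((t.1 - 1, t.2) ∈ C ∨ (t.1 - 1, t.2) ∈ M)
  hnomark : ∀ t ∈ M, ¬ travTile C c t true ∧ ¬ travTile C c t false

namespace JCtx

variable {C M : Finset (ℕ × ℕ)} {n c : ℕ} (H : JCtx C M n c)
include H

lemma e_pass {y : ℕ} (hy : y < c) : pipePasses C c ((eRow C c y, y), false) :=
  e_spec H.hC4 H.hc1 H.habove H.hnomark hy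

lemma e_pos {y : ℕ} (hy : y < c) : 1 ≤ eRow C c y := pass_row_ge (H.e_pass hy)

lemma e_cm1 : eRow C c (c - 1) = rrRow C c :=
  e_eq ⟨rrRow C c, pass_rr H.hC4 H.hc1⟩

lemma colc_mem {i : ℕ} (h1 : 1 ≤ i) : ((i, c) ∈ C ↔ i < rrRow C c) :=
  colc_iff H.hC4 H.hc1 H.hcol h1

/-- Dichotomy : in each column `y < c` the removable pipe either crosses horizontally
(at row `eRow y`, with `eRow (y-1) = eRow y`), or makes a bump pair. -/
lemma e_dichot {y : ℕ} (h1 : 1 ≤ y) (hy : y < c) :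
    ((eRow C c y, y) ∈ C ∧ eRow C c (y - 1) = eRow C c y) ∨
    ((eRow C c y, y) ∉ C ∧ (eRow C c y + 1, y) ∉ C ∧
      eRow C c (y - 1) = eRow C c y + 1 ∧
      pipePasses C c ((eRow C c y + 1, y), true)) := by
  have hp := H.e_pass hy
  by_cases hmem : (eRow C c y, y) ∈ C
  · left
    refine ⟨hmem, e_eq ?_⟩
    have := pass_step C c hp
    rwa [step_cross_false C (by omega) hmem] at this
  · right
    have hb := bump_pair H.habove H.hnomark h1 hp hmem
    have h2 := pass_step C c hp
    rw [step_bump_false C (by omega) hmem] at h2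
    have h3 := pass_step C c h2
    rw [step_bump_true C (by omega) hb] at h3
    exact ⟨hmem, hb, e_eq h3, h2⟩

lemma e_lower {y : ℕ} (h1 : 1 ≤ y) (hy : y < c) : eRow C c y ≤ eRow C c (y - 1) := by
  rcases H.e_dichot h1 hy with ⟨-, h⟩ | ⟨-, -, h, -⟩ <;> omega

lemma e_upper {y : ℕ} (h1 : 1 ≤ y) (hy : y < c) : eRow C c (y - 1) ≤ eRow C c y + 1 := by
  rcases H.e_dichot h1 hy with ⟨-, h⟩ | ⟨-, -, h, -⟩ <;> omega

lemma crossedIntoLe_iff {y i : ℕ} (hy : y < c) :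
    crossedIntoLe C c y i ↔ eRow C c y ≤ i := by
  constructor
  · rintro ⟨i', hi', hp⟩
    rw [e_eq hp]; exact hi'
  · intro h
    exact ⟨eRow C c y, h, H.e_pass hy⟩

lemma oldPos_lt {i y : ℕ} (hy : y < c) (d : Bool) :
    oldPos C c (i, y) d =
      (i + (if eRow C c (if d then y - 1 else y) ≤ i then 1 else 0), y) := by
  unfold oldPos
  rw [if_neg (by simpa using hy)]
  by_cases h : eRow C c (if d then y - 1 else y) ≤ i
  · rw [if_pos h, cIte_pos]
    rw [(H.crossedIntoLe_iff (by cases d <;> simp <;> omega) : crossedIntoLe C c _ i ↔ _)]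
    simpa using h
  · rw [if_neg h, cIte_neg]
    rw [(H.crossedIntoLe_iff (by cases d <;> simp <;> omega) : crossedIntoLe C c _ i ↔ _)]
    simpa using h

end JCtx

lemma oldPos_ge {C : Finset (ℕ × ℕ)} {c i y : ℕ} (hy : c ≤ y) (d : Bool) :
    oldPos C c (i, y) d = (i, y + 1) := by
  unfold oldPos
  rw [if_pos (by simpa using hy)]

lemma mem_fselect {α : Type*} {p : α → Prop} {s : Finset α} {a : α} :
    a ∈ fselect p s ↔ a ∈ s ∧ p a :=
  @Finset.mem_filter α p (fun _ => Classical.propDecidable _) s a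

/-- The old state corresponding to a state of the contracted diagram. -/
noncomputable def Omap (C : Finset (ℕ × ℕ)) (c : ℕ) (s : (ℕ × ℕ) × Bool) :
    (ℕ × ℕ) × Bool := (oldPos C c s.1 s.2, s.2)

/-- The crossing set of the contracted diagram. -/
noncomputable def newC (C : Finset (ℕ × ℕ)) (n c : ℕ) : Finset (ℕ × ℕ) :=
  fselect (fun t => oldPos C c t true ∈ C) (staircase (n - 1))

lemma oldPos_col (C : Finset (ℕ × ℕ)) (c : ℕ) (t : ℕ × ℕ) (d : Bool) :
    (oldPos C c t d).2 = if c ≤ t.2 then t.2 + 1 else t.2 := by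
  unfold oldPos
  split_ifs with h <;> simp [h]

lemma Omap_col_ne (C : Finset (ℕ × ℕ)) {c : ℕ} (s : (ℕ × ℕ) × Bool) :
    (Omap C c s).1.2 ≠ c := by
  show (oldPos C c s.1 s.2).2 ≠ c
  rw [oldPos_col]
  split_ifs with h <;> omega

lemma Omap_d (C : Finset (ℕ × ℕ)) (c : ℕ) (s : (ℕ × ℕ) × Bool) :
    (Omap C c s).2 = s.2 := rfl

namespace JCtx

variable {C M : Finset (ℕ × ℕ)} {n c : ℕ} (H : JCtx C M n c)
include H

lemma mem_newC (hn : 1 ≤ n) {i y : ℕ} (hi : 1 ≤ i) (hy : 1 ≤ y) :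
    (i, y) ∈ newC C n c ↔ oldPos C c (i, y) true ∈ C := by
  unfold newC
  rw [mem_fselect]
  constructor
  · exact fun h => h.2
  · intro h
    refine ⟨?_, h⟩
    rw [mem_staircase]
    refine ⟨hi, hy, ?_⟩
    rcases Nat.lt_or_ge y c with h' | h'
    · rw [H.oldPos_lt h' true] at h
      have := H.hC4 _ h
      simp at this
      split_ifs at this <;> omega
    · rw [oldPos_ge h' true] at h
      have := H.hC4 _ h
      simp at this; omega

lemma Omap_inj {s s' : (ℕ × ℕ) × Bool} (h : Omap C c s = Omap C c s') : s = s' := by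
  obtain ⟨⟨i, y⟩, d⟩ := s
  obtain ⟨⟨i', y'⟩, d'⟩ := s'
  have hd : d = d' := by
    have := congrArg Prod.snd h; simpa [Omap] using this
  subst hd
  have hcol := congrArg (fun z => z.1.2) h
  simp only [Omap, oldPos_col] at hcol
  have hy : y = y' := by split_ifs at hcol <;> omega
  subst hy
  have hrow := congrArg (fun z => z.1.1) h
  rcases Nat.lt_or_ge y c with h' | h'
  · simp only [Omap, H.oldPos_lt h' d] at hrow
    have : i = i' := by split_ifs at hrow <;> omega
    rw [this]
  · simp only [Omap, oldPos_ge h' d] at hrow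
    rw [hrow]

/-- No state of the contracted diagram corresponds to the position where the removed
pipe crosses (horizontally) into column `y - 1`. -/
lemma np_true {y : ℕ} (hy1 : 1 ≤ y) (hyc : y < c) (s' : (ℕ × ℕ) × Bool) :
    Omap C c s' ≠ ((eRow C c (y - 1), y), true) := by
  obtain ⟨⟨i, y'⟩, d⟩ := s'
  intro h
  have hd : d = true := by
    have := congrArg Prod.snd h; simpa [Omap] using this
  subst hd
  have hcol := congrArg (fun z => z.1.2) h
  simp only [Omap, oldPos_col] at hcol
  have hy' : y' = y := by split_ifs at hcol <;> omega
  subst hy'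
  have hrow := congrArg (fun z => z.1.1) h
  simp only [Omap, H.oldPos_lt hyc true] at hrow
  split_ifs at hrow <;> omega

end JCtx

namespace JCtx

variable {C M : Finset (ℕ × ℕ)} {n c : ℕ} (H : JCtx C M n c)
include H

lemma throughColC {i : ℕ} (h1 : 1 ≤ i) :
    (step C)^[if rrRow C c ≤ i then 2 else 1] ((i, c), false)
      = ((i + (if rrRow C c ≤ i then 1 else 0), c - 1), false) ∧
    ∀ δ', 1 ≤ δ' → δ' < (if rrRow C c ≤ i then 2 else 1) →
      ((step C)^[δ'] ((i, c), false)).1.2 = c := by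
  have hc0 : c ≠ 0 := by have := H.hc1; omega
  by_cases hrr : rrRow C c ≤ i
  · have hnc : (i, c) ∉ C := fun h => by
      have := (H.colc_mem h1).mp h; omega
    have hnc2 : (i + 1, c) ∉ C := fun h => by
      have := (H.colc_mem (by omega)).mp h; omega
    have hs1 : step C ((i, c), false) = ((i + 1, c), true) := step_bump_false C hc0 hnc
    have hs2 : step C ((i + 1, c), true) = ((i + 1, c - 1), false) := step_bump_true C hc0 hnc2
    rw [if_pos hrr, if_pos hrr]
    constructor
    · show step C ((step C)^[1] ((i, c), false)) = _
      rw [Function.iterate_one, hs1, hs2]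
    · intro δ' hδ1 hδ2
      have : δ' = 1 := by omega
      subst this
      rw [Function.iterate_one, hs1]
  · have hmem : (i, c) ∈ C := (H.colc_mem h1).mpr (by omega)
    rw [if_neg hrr, if_neg hrr]
    refine ⟨?_, fun δ' h1 h2 => by omega⟩
    rw [Function.iterate_one, step_cross_false C hc0 hmem]
    rfl

/-- The key single-step simulation : one step of the contracted pipe dream corresponds
to `δ ∈ {1,2,3}` steps of the original one, and the intermediate original states have
no counterpart in the contracted diagram. -/
lemma step_match (hn : 1 ≤ n) (i y : ℕ) (d : Bool) (hi : 1 ≤ i) :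
    ∃ δ, 1 ≤ δ ∧
      (step C)^[δ] (Omap C c ((i, y), d)) = Omap C c (step (newC C n c) ((i, y), d)) ∧
      ∀ δ', 1 ≤ δ' → δ' < δ → ∀ s', Omap C c s' ≠ (step C)^[δ'] (Omap C c ((i, y), d)) := by
  have hc0 : c ≠ 0 := by have := H.hc1; omega
  by_cases hy0 : y = 0
  · -- absorbed state
    subst hy0
    refine ⟨1, le_refl 1, ?_, fun δ' h1 h2 => by omega⟩
    rw [Function.iterate_one, step_absorb (newC C n c) _ rfl, step_absorb]
    show (oldPos C c (i, 0) d).2 = 0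
    rw [oldPos_col]
    simp; omega
  have hy1 : 1 ≤ y := by omega
  rcases Nat.lt_or_ge y c with hyc | hyc
  · -- left zone : y < c
    have hym : y - 1 < c := by omega
    have hOt : Omap C c ((i, y), true)
        = ((i + (if eRow C c (y - 1) ≤ i then 1 else 0), y), true) := by
      simp only [Omap, H.oldPos_lt hyc]; simp
    have hOf : Omap C c ((i, y), false)
        = ((i + (if eRow C c y ≤ i then 1 else 0), y), false) := by
      simp only [Omap, H.oldPos_lt hyc]; simp
    have hOf' : ∀ i', Omap C c ((i', y - 1), false)
        = ((i' + (if eRow C c (y - 1) ≤ i' then 1 else 0), y - 1), false) := by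
      intro i'; simp only [Omap, H.oldPos_lt hym]; simp
    have hOt' : ∀ i', Omap C c ((i', y), true)
        = ((i' + (if eRow C c (y - 1) ≤ i' then 1 else 0), y), true) := by
      intro i'; simp only [Omap, H.oldPos_lt hyc]; simp
    have hQiff : ((i, y) ∈ newC C n c)
        ↔ (i + (if eRow C c (y - 1) ≤ i then 1 else 0), y) ∈ C := by
      rw [H.mem_newC hn hi hy1, H.oldPos_lt hyc true]; simp
    have helow : eRow C c y ≤ eRow C c (y - 1) := H.e_lower hy1 hyc
    have heup : eRow C c (y - 1) ≤ eRow C c y + 1 := H.e_upper hy1 hyc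
    by_cases hmem : (i + (if eRow C c (y - 1) ≤ i then 1 else 0), y) ∈ C
    · -- the contracted tile is a crossing
      have hQ : (i, y) ∈ newC C n c := hQiff.mpr hmem
      cases d
      · -- entering from the right
        have hsQ : step (newC C n c) ((i, y), false) = ((i, y - 1), false) :=
          step_cross_false _ (by omega) hQ
        -- the two shift amounts agree
        have heq : (if eRow C c y ≤ i then 1 else 0) = (if eRow C c (y - 1) ≤ i then 1 else 0) := by
          by_cases h1 : eRow C c (y - 1) ≤ i
          · rw [if_pos h1, if_pos (by omega)]
          · by_cases h2 : eRow C c y ≤ i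
            · -- e y ≤ i < e (y-1) : bump-pair case, contradicting hmem
              exfalso
              have hieq : i = eRow C c y := by omega
              rcases H.e_dichot hy1 hyc with ⟨hc', he'⟩ | ⟨hnc', -, -, -⟩
              · omega
              · rw [if_neg h1] at hmem
                rw [hieq] at hmem
                simp at hmem
                exact hnc' hmem
            · rw [if_neg h1, if_neg h2]
        refine ⟨1, le_refl 1, ?_, fun δ' h1 h2 => by omega⟩
        rw [Function.iterate_one, hsQ, hOf, hOf', heq,
          step_cross_false C (by omega) (heq ▸ hmem)]
      · -- entering from the top
        have hsQ : step (newC C n c) ((i, y), true) = ((i + 1, y), true) :=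
          step_cross_true _ (by omega) hQ
        by_cases h1 : eRow C c (y - 1) ≤ i
        · refine ⟨1, le_refl 1, ?_, fun δ' ha hb => by omega⟩
          rw [Function.iterate_one, hsQ, hOt, hOt', if_pos h1, if_pos (by omega),
            step_cross_true C (by omega) (by rw [if_pos h1] at hmem; exact hmem)]
        · rw [if_neg h1] at hmem
          simp only [Nat.add_zero] at hmem
          by_cases h2 : eRow C c (y - 1) ≤ i + 1
          · -- i + 1 = e (y-1) : pass through the horizontal crossing of the removed pipe
            have hee : eRow C c (y - 1) = i + 1 := by omega
            rcases H.e_dichot hy1 hyc with ⟨hc', he'⟩ | ⟨hnc', -, he', -⟩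
            · have hmem2 : (i + 1, y) ∈ C := by rw [← hee, he']; exact hc'
              refine ⟨2, by omega, ?_, ?_⟩
              · rw [hsQ, hOt, hOt', if_neg h1, if_pos h2]
                show step C ((step C)^[1] _) = _
                rw [Function.iterate_one]
                simp only [Nat.add_zero]
                rw [step_cross_true C (by omega) hmem, step_cross_true C (by omega) hmem2]
              · intro δ' ha hb s'
                have : δ' = 1 := by omega
                subst this
                rw [hOt, Function.iterate_one]
                simp only [if_neg h1, Nat.add_zero]
                rw [step_cross_true C (by omega) hmem]
                rw [← hee]
                exact H.np_true hy1 hyc s'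
            · -- bump-pair : then (i, y) ∉ C, contradiction
              exfalso
              have : eRow C c y = i := by omega
              rw [← this] at hmem
              exact hnc' hmem
          · refine ⟨1, le_refl 1, ?_, fun δ' ha hb => by omega⟩
            rw [Function.iterate_one, hsQ, hOt, hOt', if_neg h1, if_neg h2]
            simp only [Nat.add_zero]
            rw [step_cross_true C (by omega) hmem]
    · -- the contracted tile is a bump
      have hQ : (i, y) ∉ newC C n c := fun h => hmem (hQiff.mp h)
      cases d
      · -- entering from the right : the pipe turns down
        have hsQ : step (newC C n c) ((i, y), false) = ((i + 1, y), true) :=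
          step_bump_false _ (by omega) hQ
        by_cases hef : eRow C c y ≤ i
        · -- the original state is ((i+1, y), false)
          have hnc2 : (i + 1, y) ∉ C := by
            by_cases h1 : eRow C c (y - 1) ≤ i
            · rw [if_pos h1] at hmem; exact hmem
            · -- i = e y, bump pair
              have hieq : i = eRow C c y := by omega
              rcases H.e_dichot hy1 hyc with ⟨-, he'⟩ | ⟨-, hnc', -, -⟩
              · omega
              · rw [hieq]; exact hnc'
          have h2 : eRow C c (y - 1) ≤ i + 1 := by omega
          refine ⟨1, le_refl 1, ?_, fun δ' ha hb => by omega⟩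
          rw [Function.iterate_one, hsQ, hOf, hOt', if_pos hef, if_pos h2,
            step_bump_false C (by omega) hnc2]
        · -- i < e y ≤ e (y-1)
          have h1 : ¬ eRow C c (y - 1) ≤ i := by omega
          rw [if_neg h1] at hmem
          simp only [Nat.add_zero] at hmem
          have hsP : step C ((i, y), false) = ((i + 1, y), true) :=
            step_bump_false C (by omega) hmem
          by_cases h2 : eRow C c (y - 1) ≤ i + 1
          · -- crossing of the removed pipe directly below
            have hee : eRow C c (y - 1) = i + 1 := by omega
            rcases H.e_dichot hy1 hyc with ⟨hc', he'⟩ | ⟨-, -, he', -⟩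
            · have hmem2 : (i + 1, y) ∈ C := by rw [← hee, he']; exact hc'
              refine ⟨2, by omega, ?_, ?_⟩
              · rw [hsQ, hOf, hOt', if_neg (by omega), if_pos h2]
                show step C ((step C)^[1] _) = _
                rw [Function.iterate_one]
                simp only [Nat.add_zero]
                rw [hsP, step_cross_true C (by omega) hmem2]
              · intro δ' ha hb s'
                have : δ' = 1 := by omega
                subst this
                rw [hOf, Function.iterate_one]
                simp only [if_neg (show ¬ eRow C c y ≤ i by omega), Nat.add_zero]
                rw [hsP, ← hee]
                exact H.np_true hy1 hyc s'
            · omega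
          · refine ⟨1, le_refl 1, ?_, fun δ' ha hb => by omega⟩
            rw [Function.iterate_one, hsQ, hOf, hOt', if_neg (by omega), if_neg h2]
            simp only [Nat.add_zero]
            rw [hsP]
      · -- entering from the top : the pipe turns left
        have hsQ : step (newC C n c) ((i, y), true) = ((i, y - 1), false) :=
          step_bump_true _ (by omega) hQ
        refine ⟨1, le_refl 1, ?_, fun δ' ha hb => by omega⟩
        rw [Function.iterate_one, hsQ, hOt, hOf',
          step_bump_true C (by omega) hmem]
  · -- right zone : c ≤ y
    have hOr : ∀ (i' : ℕ) (d' : Bool), Omap C c ((i', y), d') = ((i', y + 1), d') := by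
      intro i' d'; simp only [Omap, oldPos_ge hyc]
    have hQiff : ((i, y) ∈ newC C n c) ↔ (i, y + 1) ∈ C := by
      rw [H.mem_newC hn hi hy1, oldPos_ge hyc true]
    by_cases hmem : (i, y + 1) ∈ C
    · have hQ : (i, y) ∈ newC C n c := hQiff.mpr hmem
      cases d
      · -- entering from right, crossing : move left, possibly through column c
        have hsQ : step (newC C n c) ((i, y), false) = ((i, y - 1), false) :=
          step_cross_false _ (by omega) hQ
        have hsP : step C ((i, y + 1), false) = ((i, y), false) := by
          have := step_cross_false C (show y + 1 ≠ 0 by omega) hmem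
          simpa using this
        rcases Nat.lt_or_ge (y - 1) c with hyc2 | hyc2
        · -- y = c : pass through the deleted column
          have hyceq : c = y := by omega
          subst hyceq
          obtain ⟨hthru, hcolc⟩ := H.throughColC hi
          have hOtarget : Omap C c ((i, c - 1), false)
              = ((i + (if rrRow C c ≤ i then 1 else 0), c - 1), false) := by
            simp only [Omap, H.oldPos_lt (show c - 1 < c by omega)]
            simp [H.e_cm1]
          refine ⟨(if rrRow C c ≤ i then 2 else 1) + 1, by split_ifs <;> omega, ?_, ?_⟩
          · rw [hsQ, hOtarget, hOr, Function.iterate_add_apply, Function.iterate_one,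
              hsP, hthru]
          · intro δ' ha hb s'
            rw [hOr]
            rcases Nat.eq_or_lt_of_le ha with h1 | h1
            · rw [← h1, Function.iterate_one, hsP]
              intro hcon
              exact Omap_col_ne C s' (by rw [hcon])
            · obtain ⟨δ'', rfl⟩ : ∃ δ'', δ' = δ'' + 1 := ⟨δ' - 1, by omega⟩
              rw [Function.iterate_succ_apply, hsP]
              intro hcon
              have hcc := hcolc δ'' (by omega) (by split_ifs at hb ⊢ <;> omega)
              rw [← hcon] at hcc
              exact Omap_col_ne C s' hcc
        · -- stay in the right zone
          have hy2 : c ≤ y - 1 := hyc2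
          refine ⟨1, le_refl 1, ?_, fun δ' ha hb => by omega⟩
          have hOr2 : Omap C c ((i, y - 1), false) = ((i, y - 1 + 1), false) := by
            simp only [Omap, oldPos_ge hy2]
          rw [Function.iterate_one, hsQ, hOr, hOr2, hsP]
          congr 2
          omega
      · have hsQ : step (newC C n c) ((i, y), true) = ((i + 1, y), true) :=
          step_cross_true _ (by omega) hQ
        refine ⟨1, le_refl 1, ?_, fun δ' ha hb => by omega⟩
        rw [Function.iterate_one, hsQ, hOr, hOr,
          step_cross_true C (by omega) hmem]
    · have hQ : (i, y) ∉ newC C n c := fun h => hmem (hQiff.mp h)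
      cases d
      · have hsQ : step (newC C n c) ((i, y), false) = ((i + 1, y), true) :=
          step_bump_false _ (by omega) hQ
        refine ⟨1, le_refl 1, ?_, fun δ' ha hb => by omega⟩
        rw [Function.iterate_one, hsQ, hOr, hOr,
          step_bump_false C (by omega) hmem]
      · -- bump entered from the top : move left, possibly through column c
        have hsQ : step (newC C n c) ((i, y), true) = ((i, y - 1), false) :=
          step_bump_true _ (by omega) hQ
        have hsP : step C ((i, y + 1), true) = ((i, y), false) := by
          have := step_bump_true C (show y + 1 ≠ 0 by omega) hmem
          simpa using this
        rcases Nat.lt_or_ge (y - 1) c with hyc2 | hyc2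
        · -- y = c : pass through the deleted column
          have hyceq : c = y := by omega
          subst hyceq
          obtain ⟨hthru, hcolc⟩ := H.throughColC hi
          have hOtarget : Omap C c ((i, c - 1), false)
              = ((i + (if rrRow C c ≤ i then 1 else 0), c - 1), false) := by
            simp only [Omap, H.oldPos_lt (show c - 1 < c by omega)]
            simp [H.e_cm1]
          refine ⟨(if rrRow C c ≤ i then 2 else 1) + 1, by split_ifs <;> omega, ?_, ?_⟩
          · rw [hsQ, hOtarget, hOr, Function.iterate_add_apply, Function.iterate_one,
              hsP, hthru]
          · intro δ' ha hb s'
            rw [hOr]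
            rcases Nat.eq_or_lt_of_le ha with h1 | h1
            · rw [← h1, Function.iterate_one, hsP]
              intro hcon
              exact Omap_col_ne C s' (by rw [hcon])
            · obtain ⟨δ'', rfl⟩ : ∃ δ'', δ' = δ'' + 1 := ⟨δ' - 1, by omega⟩
              rw [Function.iterate_succ_apply, hsP]
              intro hcon
              have hcc := hcolc δ'' (by omega) (by split_ifs at hb ⊢ <;> omega)
              rw [← hcon] at hcc
              exact Omap_col_ne C s' hcc
        · have hy2 : c ≤ y - 1 := hyc2
          refine ⟨1, le_refl 1, ?_, fun δ' ha hb => by omega⟩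
          have hOr2 : Omap C c ((i, y - 1), false) = ((i, y - 1 + 1), false) := by
            simp only [Omap, oldPos_ge hy2]
          rw [Function.iterate_one, hsQ, hOr, hOr2, hsP]
          congr 2
          omega

end JCtx

namespace JCtx

variable {C M : Finset (ℕ × ℕ)} {n c : ℕ} (H : JCtx C M n c)
include H

/-- Full simulation of the contracted pipe by the original pipe. -/
lemma sim (hn : 1 ≤ n) (b bh m0 : ℕ)
    (hstart : pipeState C bh m0 = Omap C c (pipeState (newC C n c) b 0))
    (hcov0 : ∀ m' ≤ m0, ∀ s, Omap C c s = pipeState C bh m' →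
      ∃ k' ≤ 0, pipeState (newC C n c) b k' = s) :
    ∀ k, ∃ m, k ≤ m ∧
      pipeState C bh m = Omap C c (pipeState (newC C n c) b k) ∧
      ∀ m' ≤ m, ∀ s, Omap C c s = pipeState C bh m' →
        ∃ k' ≤ k, pipeState (newC C n c) b k' = s := by
  intro k
  induction k with
  | zero =>
      exact ⟨m0, Nat.zero_le _, hstart, hcov0⟩
  | succ k ih =>
      obtain ⟨m, hkm, hsim, hcov⟩ := ih
      obtain ⟨⟨⟨i, y⟩, d⟩, hQk⟩ : ∃ s, pipeState (newC C n c) b k = s := ⟨_, rfl⟩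
      have hi : 1 ≤ i := by
        have := ps_row (newC C n c) b k
        rw [hQk] at this; exact this
      obtain ⟨δ, hδ1, hδeq, hnp⟩ := H.step_match hn i y d hi
      refine ⟨m + δ, by omega, ?_, ?_⟩
      · have h1 : pipeState C bh (m + δ) = (step C)^[δ] (pipeState C bh m) := by
          show (step C)^[m + δ] _ = _
          rw [Nat.add_comm, Function.iterate_add_apply]
          rfl
        rw [h1, hsim, hQk, hδeq, pipeState_succ, hQk]
      · intro m'' hm'' s hs
        rcases Nat.lt_or_ge m m'' with h | h
        swap
        · obtain ⟨k', hk', he⟩ := hcov m'' h s hs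
          exact ⟨k', by omega, he⟩
        obtain ⟨δ', rfl⟩ : ∃ δ', m'' = m + δ' := ⟨m'' - m, by omega⟩
        have hδ'1 : 1 ≤ δ' := by omega
        have hδ'δ : δ' ≤ δ := by omega
        have h1 : pipeState C bh (m + δ') = (step C)^[δ'] (Omap C c ((i, y), d)) := by
          show (step C)^[m + δ'] _ = _
          rw [Nat.add_comm, Function.iterate_add_apply]
          rw [show (step C)^[m] ((1, bh), true) = pipeState C bh m from rfl, hsim, hQk]
        rcases Nat.lt_or_ge δ' δ with h2 | h2
        · exact absurd (hs.trans h1) (hnp δ' hδ'1 h2 s)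
        · have : δ' = δ := by omega
          subst this
          rw [h1, hδeq] at hs
          have : s = step (newC C n c) ((i, y), d) := H.Omap_inj hs
          refine ⟨k + 1, le_refl _, ?_⟩
          rw [pipeState_succ, hQk, this]

end JCtx

/- ---------- wordCol arithmetic ---------- -/

lemma filter_erase_len (j : ℕ) (p : ℕ → Bool) :
    ∀ l : List ℕ, j ∈ l →
      ((l.erase j).filter p).length + (if p j then 1 else 0) = (l.filter p).length := by
  intro l
  induction l with
  | nil => intro h; simp at h
  | cons a t ih =>
      intro hj
      by_cases haj : a = j
      · subst haj
        rw [List.erase_cons_head, List.filter_cons]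
        by_cases hpj : p a = true
        · rw [if_pos hpj, if_pos hpj]; simp
        · rw [if_neg hpj, if_neg hpj]; simp
      · have hjt : j ∈ t := by
          rcases List.mem_cons.mp hj with h | h
          · exact absurd h.symm haj
          · exact h
        rw [List.erase_cons_tail (by simp [haj]), List.filter_cons, List.filter_cons]
        have hih := ih hjt
        by_cases hpa : p a = true
        · rw [if_pos hpa, if_pos hpa]
          simp only [List.length_cons]
          omega
        · rw [if_neg hpa, if_neg hpa]
          exact hih

lemma filter_lt_mono {a b : ℕ} (hab : a ≤ b) (l : List ℕ) :
    (l.filter (fun y => decide (y < a))).length ≤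
    (l.filter (fun y => decide (y < b))).length := by
  induction l with
  | nil => simp
  | cons x t ih =>
      rw [List.filter_cons, List.filter_cons]
      split_ifs with h1 h2 h2 <;> simp_all <;> omega

lemma filter_lt_strict {j j' : ℕ} (hjj : j < j') :
    ∀ l : List ℕ, j ∈ l →
      (l.filter (fun y => decide (y < j))).length <
      (l.filter (fun y => decide (y < j'))).length := by
  intro l
  induction l with
  | nil => intro h; simp at h
  | cons a t ih =>
      intro hj
      rcases List.mem_cons.mp hj with h | h
      · subst h
        rw [List.filter_cons, List.filter_cons]
        have := filter_lt_mono (le_of_lt hjj) t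
        split_ifs with h1 h2 h2 <;> simp_all <;> omega
      · have := ih h
        rw [List.filter_cons, List.filter_cons]
        split_ifs with h1 h2 h2 <;> simp_all <;> omega

namespace JCtx

variable {C M : Finset (ℕ × ℕ)} {n c : ℕ} (H : JCtx C M n c)
include H

/-- If the (old) tile reached with the `d = true` shift is a crossing or a marked tile,
the `d = false` shift agrees with it. -/
lemma eps_agree {y i : ℕ} (hy1 : 1 ≤ y) (hyc : y < c)
    (hC : (i + (if eRow C c (y - 1) ≤ i then 1 else 0), y) ∈ C ∨
          (i + (if eRow C c (y - 1) ≤ i then 1 else 0), y) ∈ M) :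
    (if eRow C c y ≤ i then 1 else 0) = (if eRow C c (y - 1) ≤ i then 1 else 0) := by
  by_cases h1 : eRow C c (y - 1) ≤ i
  · rw [if_pos h1, if_pos (by have := H.e_lower hy1 hyc; omega)]
  · by_cases h2 : eRow C c y ≤ i
    · exfalso
      have hieq : i = eRow C c y := by
        have := H.e_upper hy1 hyc; have := H.e_lower hy1 hyc; omega
      rcases H.e_dichot hy1 hyc with ⟨-, he'⟩ | ⟨hnc', -, -, -⟩
      · omega
      · rw [if_neg h1] at hC
        rw [hieq] at hC
        simp only [Nat.add_zero] at hC
        rcases hC with hC | hC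
        · exact hnc' hC
        · exact (H.hnomark _ hC).2 (H.e_pass hyc)
    · rw [if_neg h1, if_neg h2]

lemma Omap_true {y i : ℕ} (hyc : y < c) :
    Omap C c ((i, y), true) = ((i + (if eRow C c (y - 1) ≤ i then 1 else 0), y), true) := by
  simp only [Omap, H.oldPos_lt hyc]; simp

lemma Omap_false {y i : ℕ} (hyc : y < c) :
    Omap C c ((i, y), false) = ((i + (if eRow C c y ≤ i then 1 else 0), y), false) := by
  simp only [Omap, H.oldPos_lt hyc]; simp

end JCtx

lemma Omap_ge {C : Finset (ℕ × ℕ)} {c y : ℕ} (hyc : c ≤ y) (i : ℕ) (d : Bool) :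
    Omap C c ((i, y), d) = ((i, y + 1), d) := by
  simp only [Omap, oldPos_ge hyc]

namespace JCtx

variable {C M : Finset (ℕ × ℕ)} {n c : ℕ} (H : JCtx C M n c)
include H

lemma oldPos_true' {y i : ℕ} (hyc : y < c) :
    oldPos C c (i, y) true = (i + (if eRow C c (y - 1) ≤ i then 1 else 0), y) :=
  congrArg Prod.fst (H.Omap_true (i := i) hyc)

end JCtx

/-- If pipes `j` and `j'` (`j ≠ j'`) are both removable in `P ∈ MRPD(w)`,
then pipe `j'` is still removable in `Φ_j(P)`. -/
theorem removable_after_phiOp (n : ℕ) (w : Equiv.Perm (Fin n)) (P : PD)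
    (hword : P.word = permWord w) (hP : isMRPD P) (j j' : ℕ) (hne : j ≠ j')
    (hj : Removable P j) (hj' : Removable P j') :
    Removable (PhiOp P j) j' := by
  obtain ⟨hjmem, hjcolc, hjnomarkc, hjabove, hjnomark⟩ := hj
  obtain ⟨hj'mem, hj'colc, hj'nomarkc, hj'above, hj'nomark⟩ := hj'
  set N := P.word.length with hN
  set c := wordCol P.word j with hc
  set c' := wordCol P.word j' with hcp
  set c'' := wordCol (P.word.erase j) j' with hcpp
  have H : JCtx P.C P.M N c := ⟨hP.2.2.2.1, Nat.le_add_left 1 _, hjcolc, hjabove, hjnomark⟩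
  have hn : 1 ≤ N := List.length_pos_iff.mpr (List.ne_nil_of_mem hjmem)
  have hc''1 : 1 ≤ c'' := Nat.le_add_left 1 _
  have hsplit : (c ≤ c'' ∧ c'' + 1 = c') ∨ (c'' < c ∧ c'' = c') := by
    rcases Nat.lt_or_ge j j' with hjj | hjj
    · left
      have h1 := filter_erase_len j (fun y => decide (y < j')) P.word hjmem
      rw [if_pos (by simpa using hjj)] at h1
      have h2 := filter_lt_strict hjj P.word hjmem
      constructor
      · simp only [hc, hcpp, wordCol]; omega
      · simp only [hcp, hcpp, wordCol]; omega
    · right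
      have hjj' : j' < j := by omega
      have h1 := filter_erase_len j (fun y => decide (y < j')) P.word hjmem
      rw [if_neg (by simp; omega)] at h1
      have h2 := filter_lt_strict hjj' P.word hj'mem
      constructor
      · simp only [hc, hcpp, wordCol]; omega
      · simp only [hcp, hcpp, wordCol]; omega
  have hQC : (PhiOp P j).C = newC P.C N c := rfl
  have hQM : (PhiOp P j).M
      = fselect (fun t => oldPos P.C c t true ∈ P.M) (staircase (N - 1)) := rfl
  have hwc : wordCol (PhiOp P j).word j' = c'' := hcpp.symm
  have hQ0 : pipeState (newC P.C N c) c'' 0 = ((1, c''), true) := rfl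
  have hP0 : pipeState P.C c' 0 = ((1, c'), true) := rfl
  -- the simulation
  have hsim : ∀ k, ∃ m, k ≤ m ∧
      pipeState P.C c' m = Omap P.C c (pipeState (newC P.C N c) c'' k) ∧
      ∀ m' ≤ m, ∀ s, Omap P.C c s = pipeState P.C c' m' →
        ∃ k' ≤ k, pipeState (newC P.C N c) c'' k' = s := by
    rcases hsplit with ⟨hle, heq⟩ | ⟨hlt, heq⟩
    · have hstart : pipeState P.C c' 0 = Omap P.C c (pipeState (newC P.C N c) c'' 0) := by
        rw [hQ0, Omap_ge hle, heq, hP0]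
      refine H.sim hn c'' c' 0 hstart ?_
      intro m' hm' s hs
      have hm0 : m' = 0 := by omega
      subst hm0
      refine ⟨0, le_refl _, (H.Omap_inj (hs.trans hstart)).symm⟩
    · by_cases hone : eRow P.C c (c'' - 1) ≤ 1
      · -- the pipe of `j` crosses tile (1, c'') horizontally
        have he1 : eRow P.C c (c'' - 1) = 1 :=
          le_antisymm hone (H.e_pos (show c'' - 1 < c by omega))
        have hcm : (1, c') ∈ P.C := by
          rcases H.e_dichot hc''1 hlt with ⟨hcr, hee⟩ | ⟨-, -, hee, -⟩
          · rw [← heq]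
            have : eRow P.C c c'' = 1 := by omega
            rwa [this] at hcr
          · have := H.e_pos (show c'' < c from hlt); omega
        have hstart : pipeState P.C c' 1 = Omap P.C c (pipeState (newC P.C N c) c'' 0) := by
          rw [hQ0, H.Omap_true hlt, if_pos hone,
            show pipeState P.C c' 1 = step P.C (pipeState P.C c' 0) from pipeState_succ _ _ 0,
            hP0, step_cross_true P.C (by omega) hcm, heq]
        refine H.sim hn c'' c' 1 hstart ?_
        intro m' hm' s hs
        rcases Nat.eq_zero_or_pos m' with hm0 | hm0
        · subst hm0
          exfalso
          rw [hP0] at hs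
          have hs' : Omap P.C c s = ((eRow P.C c (c'' - 1), c''), true) := by
            rw [hs, he1, heq]
          exact H.np_true hc''1 hlt s hs'
        · have hm1 : m' = 1 := by omega
          subst hm1
          exact ⟨0, le_refl _, (H.Omap_inj (hs.trans hstart)).symm⟩
      · have hstart : pipeState P.C c' 0 = Omap P.C c (pipeState (newC P.C N c) c'' 0) := by
          rw [hQ0, H.Omap_true hlt, if_neg hone, hP0, heq]
        refine H.sim hn c'' c' 0 hstart ?_
        intro m' hm' s hs
        have hm0 : m' = 0 := by omega
        subst hm0
        refine ⟨0, le_refl _, (H.Omap_inj (hs.trans hstart)).symm⟩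
  have hforward : ∀ s, pipePasses (PhiOp P j).C c'' s → pipePasses P.C c' (Omap P.C c s) := by
    rw [hQC]
    rintro s ⟨k, hk⟩
    obtain ⟨m, -, hm, -⟩ := hsim k
    exact ⟨m, by rw [hm, hk]⟩
  have hback : ∀ s, pipePasses P.C c' (Omap P.C c s) → pipePasses (PhiOp P j).C c'' s := by
    rw [hQC]
    rintro s ⟨m₀, hm₀⟩
    obtain ⟨m, hm1, -, hcov⟩ := hsim m₀
    obtain ⟨k', -, hk'⟩ := hcov m₀ hm1 s hm₀.symm
    exact ⟨k', hk'⟩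
  have hstairN : N - 1 + 1 = N := by omega
  refine ⟨?_, ?_, ?_, ?_, ?_⟩
  · -- (0) j' is an entry of the new word
    exact (List.mem_erase_of_ne (fun h => hne h.symm)).mpr hj'mem
  · -- (i) crossings in the entry column of j'
    intro i hiC
    rw [hwc] at hiC ⊢
    rw [hQC] at hiC
    obtain ⟨hst, hold⟩ := mem_fselect.mp hiC
    rcases hsplit with ⟨hle, heq⟩ | ⟨hlt, heq⟩
    · rw [oldPos_ge hle, heq] at hold
      rcases hj'colc i hold with hd | hd
      · exact Or.inl (hback ((i, c''), true) (by rw [Omap_ge hle, heq]; exact hd))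
      · exact Or.inr (hback ((i, c''), false) (by rw [Omap_ge hle, heq]; exact hd))
    · rw [H.oldPos_true' hlt, heq] at hold
      rcases hj'colc _ hold with hd | hd
      · refine Or.inl (hback ((i, c''), true) ?_)
        rw [H.Omap_true hlt, heq]
        exact hd
      · refine Or.inr (hback ((i, c''), false) ?_)
        rw [H.Omap_false hlt, H.eps_agree hc''1 hlt (by rw [heq]; exact Or.inl hold), heq]
        exact hd
  · -- (ii) no marked tiles in the entry column of j'
    intro i hiM
    rw [hwc] at hiM
    rw [hQM] at hiM
    obtain ⟨hst, hold⟩ := mem_fselect.mp hiM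
    rcases hsplit with ⟨hle, heq⟩ | ⟨hlt, heq⟩
    · rw [oldPos_ge hle, heq] at hold
      exact hj'nomarkc i hold
    · rw [H.oldPos_true' hlt] at hold
      rw [heq] at hold
      exact hj'nomarkc _ hold
  · -- (iii) the above-tile condition
    rintro ⟨i, y⟩ htC htrav h2
    rw [hQC] at htC
    rw [hwc] at htrav
    obtain ⟨hst, hold⟩ := mem_fselect.mp htC
    rw [mem_staircase, hstairN] at hst
    obtain ⟨hi1, hy1, hsum⟩ := hst
    simp only at h2 hi1 hy1 hsum
    obtain ⟨d, hdpass⟩ : ∃ d, pipePasses (PhiOp P j).C c'' ((i, y), d) := by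
      rcases htrav with h | h
      · exact ⟨true, h⟩
      · exact ⟨false, h⟩
    have hPp := hforward _ hdpass
    have hstair' : (i - 1, y) ∈ staircase (N - 1) := by
      rw [mem_staircase, hstairN]
      exact ⟨by omega, hy1, by omega⟩
    rcases Nat.lt_or_ge y c with hyc | hyc
    · -- left zone
      rw [H.oldPos_true' hyc] at hold
      have hPp' : pipePasses P.C c'
          ((i + (if eRow P.C c (y - 1) ≤ i then 1 else 0), y), d) := by
        cases d
        · rwa [H.Omap_false hyc, H.eps_agree hy1 hyc (Or.inl hold)] at hPp
        · rwa [H.Omap_true hyc] at hPp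
      have htravP : travTile P.C c' (i + (if eRow P.C c (y - 1) ≤ i then 1 else 0), y) true ∨
          travTile P.C c' (i + (if eRow P.C c (y - 1) ≤ i then 1 else 0), y) false := by
        cases d
        · exact Or.inr hPp'
        · exact Or.inl hPp'
      have hup := hj'above _ hold htravP (by simp; omega)
      simp only at hup
      have hkey : (i - 1 + (if eRow P.C c (y - 1) ≤ i - 1 then 1 else 0), y) ∈ P.C ∨
          (i - 1 + (if eRow P.C c (y - 1) ≤ i - 1 then 1 else 0), y) ∈ P.M := by
        by_cases hA : eRow P.C c (y - 1) ≤ i - 1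
        · rw [if_pos hA]
          rw [if_pos (by omega)] at hup
          have : i - 1 + 1 = i + 1 - 1 := by omega
          rw [this]
          exact hup
        · rw [if_neg hA]
          by_cases hB : eRow P.C c (y - 1) ≤ i
          · -- e (y-1) = i
            have hee : eRow P.C c (y - 1) = i := by omega
            rw [if_pos hB] at hup
            rcases H.e_dichot hy1 hyc with ⟨hcr, hee'⟩ | ⟨-, hnc2, hee', hpass2⟩
            · -- the removed pipe crosses (i, y) horizontally
              have hiy : (i, y) ∈ P.C := by
                have : eRow P.C c y = i := by omega
                rwa [this] at hcr
              have := hjabove (i, y) hiy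
                (Or.inr (by
                  have hp := H.e_pass hyc
                  have : eRow P.C c y = i := by omega
                  rwa [this] at hp)) (by simp; omega)
              simpa using this
            · -- bump pair : impossible since the tile below would be marked or crossing
              exfalso
              have hi2 : eRow P.C c y + 1 = i := by omega
              rcases hup with hup | hup
              · have : (i + 1 - 1, y) = (eRow P.C c y + 1, y) := by
                  rw [← hi2]; simp
                rw [this] at hup
                exact hnc2 hup
              · have : (i + 1 - 1, y) = (eRow P.C c y + 1, y) := by
                  rw [← hi2]; simp
                rw [this] at hup
                exact (hjnomark _ hup).1 hpass2
          · rw [if_neg hB] at hup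
            simpa using hup
      rcases hkey with hk | hk
      · exact Or.inl (by
          rw [hQC]
          exact mem_fselect.mpr ⟨hstair', by rw [H.oldPos_true' hyc]; exact hk⟩)
      · exact Or.inr (by
          rw [hQM]
          exact mem_fselect.mpr ⟨hstair', by rw [H.oldPos_true' hyc]; exact hk⟩)
    · -- right zone
      rw [oldPos_ge hyc] at hold
      have hPp' : pipePasses P.C c' ((i, y + 1), d) := by
        rwa [Omap_ge hyc] at hPp
      have htravP : travTile P.C c' (i, y + 1) true ∨ travTile P.C c' (i, y + 1) false := by
        cases d
        · exact Or.inr hPp'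
        · exact Or.inl hPp'
      have hup := hj'above _ hold htravP (by simp; omega)
      simp only at hup
      rcases hup with hk | hk
      · exact Or.inl (by
          rw [hQC]
          exact mem_fselect.mpr ⟨hstair', by rw [oldPos_ge hyc]; exact hk⟩)
      · exact Or.inr (by
          rw [hQM]
          exact mem_fselect.mpr ⟨hstair', by rw [oldPos_ge hyc]; exact hk⟩)
  · -- (iv) the pipe of j' meets no marked tile
    rintro ⟨i, y⟩ htM
    rw [hwc]
    rw [hQM] at htM
    obtain ⟨hst, hold⟩ := mem_fselect.mp htM
    rw [mem_staircase, hstairN] at hst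
    obtain ⟨hi1, hy1, hsum⟩ := hst
    simp only at hi1 hy1 hsum
    constructor <;> intro hpassQ
    · have hPp := hforward _ hpassQ
      rcases Nat.lt_or_ge y c with hyc | hyc
      · rw [H.oldPos_true' hyc] at hold
        rw [H.Omap_true hyc] at hPp
        exact (hj'nomark _ hold).1 hPp
      · rw [oldPos_ge hyc] at hold
        rw [Omap_ge hyc] at hPp
        exact (hj'nomark _ hold).1 hPp
    · have hPp := hforward _ hpassQ
      rcases Nat.lt_or_ge y c with hyc | hyc
      · rw [H.oldPos_true' hyc] at hold
        rw [H.Omap_false hyc, H.eps_agree hy1 hyc (Or.inr hold)] at hPp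
        exact (hj'nomark _ hold).2 hPp
      · rw [oldPos_ge hyc] at hold
        rw [Omap_ge hyc] at hPp
        exact (hj'nomark _ hold).2 hPp

end GrothPS
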